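/- The negative entropy on the probability simplex is Q_2-convex: Let n ∈ ℕ, let E = ℝ^{n+1} with the ℓ1 norm (so the dual norm is ℓ∞), let Δ^n = {w ∈ ℝ^{n+1} : w ≥ 0 componentwise, Σ_i w_i = 1}, and define ψ(w) = Σ_i w_i ln w_i for w ∈ Δ^n (with 0 ln 0 = 0) and ψ(w) = +∞ otherwise. Then ψ is Q_2-convex: for every w ∈ ℝ^{n+1}, every u ∈ Δ^n, and every u^ψ ∈ ∂ψ(u), one has B_ψ(w, u^ψ) ≥ Q_2(‖w − u‖_1), where Q_2(x) = x²/2 for |x| ≤ 2 and Q_2(x) = +∞ for |x| > 2. -/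

import Mathlib

open Finset

/-- The probability simplex `Δⁿ ⊆ ℝ^{n+1}`. -/
def simplex (n : ℕ) : Set (Fin (n + 1) → ℝ) :=
  {w | (∀ i, 0 ≤ w i) ∧ ∑ i, w i = 1}

/-- Duality pairing `⟨u, v⟩ = ∑ᵢ uᵢ vᵢ` on `ℝ^{n+1}`. -/
def pairing {n : ℕ} (u v : Fin (n + 1) → ℝ) : ℝ := ∑ i, u i * v i

/-- The `ℓ1` norm on `ℝ^{n+1}`. -/
def l1norm {n : ℕ} (v : Fin (n + 1) → ℝ) : ℝ := ∑ i, |v i|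

/-- The negative entropy `ψ(w) = ∑ᵢ wᵢ ln wᵢ + χ_{Δⁿ}(w)` (with `0 ln 0 = 0`,
which holds by `Real.log 0 = 0`). -/
noncomputable def negEnt {n : ℕ} : (Fin (n + 1) → ℝ) → EReal := fun w =>
  open scoped Classical in
  if w ∈ simplex n then (((∑ i, w i * Real.log (w i)) : ℝ) : EReal) else ⊤

/-- Fenchel conjugate w.r.t. the pairing on `ℝ^{n+1}`. -/
noncomputable def fconj {n : ℕ} (ψ : (Fin (n + 1) → ℝ) → EReal)
    (p : Fin (n + 1) → ℝ) : EReal :=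
  ⨆ x : Fin (n + 1) → ℝ, ((pairing p x : ℝ) : EReal) - ψ x

/-- Generalized Bregman divergence `B_ψ(x, y*) = ψ(x) + ψ*(y*) − ⟨y*, x⟩`. -/
noncomputable def breg {n : ℕ} (ψ : (Fin (n + 1) → ℝ) → EReal)
    (x : Fin (n + 1) → ℝ) (p : Fin (n + 1) → ℝ) : EReal :=
  ψ x + fconj ψ p - ((pairing p x : ℝ) : EReal)

/-- Subdifferential: `∂ψ(x) = {x* : B_ψ(x, x*) = 0}`. -/
def subdiff {n : ℕ} (ψ : (Fin (n + 1) → ℝ) → EReal) (x : Fin (n + 1) → ℝ) :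
    Set (Fin (n + 1) → ℝ) :=
  {p | breg ψ x p = 0}

/-- `Q_2(x) = x²/2` for `|x| ≤ 2`, `+∞` otherwise. -/
noncomputable def Q2 (x : ℝ) : EReal :=
  if |x| ≤ 2 then ((x ^ 2 / 2 : ℝ) : EReal) else ⊤

open Filter Topology

-- ## auxiliary lemmas


/-- `log t ≥ 2(t-1)/(t+1)` for `t ≥ 1`, and `≤` for `0 < t ≤ 1`, via monotonicity. -/
lemma aux_g_mono : MonotoneOn (fun t : ℝ => Real.log t - (2 - 4 / (t + 1))) (Set.Ioi 0) := by
  have hderiv : ∀ x ∈ interior (Set.Ioi (0:ℝ)),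
      HasDerivWithinAt (fun t : ℝ => Real.log t - (2 - 4 / (t + 1)))
        (1 / x - 4 / (x + 1) ^ 2) (interior (Set.Ioi (0:ℝ))) x := by
    intro x hx
    rw [interior_Ioi] at hx
    have hx0 : (0:ℝ) < x := hx
    have h1 : HasDerivAt Real.log (1 / x) x := by
      simpa [one_div] using Real.hasDerivAt_log hx0.ne'
    have h2 : HasDerivAt (fun t : ℝ => t + 1) 1 x := by
      simpa using (hasDerivAt_id x).add_const 1
    have h3 : HasDerivAt (fun t : ℝ => 4 / (t + 1))
        ((0 * (x + 1) - 4 * 1) / (x + 1) ^ 2) x :=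
      (hasDerivAt_const x (4:ℝ)).div h2 (by positivity)
    have := h1.sub ((hasDerivAt_const x (2:ℝ)).sub h3)
    rw [interior_Ioi]
    refine HasDerivAt.hasDerivWithinAt ?_
    exact this.congr_deriv (by ring)
  refine monotoneOn_of_hasDerivWithinAt_nonneg (convex_Ioi 0) ?_ hderiv ?_
  · refine ContinuousOn.sub (Real.continuousOn_log.mono ?_) ?_
    · intro x hx; exact ne_of_gt hx
    · refine (continuousOn_const.sub (continuousOn_const.div ?_ ?_))
      · fun_prop
      · intro x hx; have : (0:ℝ) < x := hx; positivity
  · intro x hx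
    rw [interior_Ioi] at hx
    have hx0 : (0:ℝ) < x := hx
    rw [div_sub_div _ _ hx0.ne' (by positivity)]
    apply div_nonneg
    · nlinarith [sq_nonneg (x - 1)]
    · positivity

lemma aux_log_ge {t : ℝ} (ht : 1 ≤ t) : 2 - 4 / (t + 1) ≤ Real.log t := by
  have h := aux_g_mono (a := 1) (b := t) (by norm_num) (by simp; linarith) ht
  simp only [Real.log_one] at h
  norm_num at h
  linarith

lemma aux_log_le {t : ℝ} (h0 : 0 < t) (ht : t ≤ 1) : Real.log t ≤ 2 - 4 / (t + 1) := by
  have h := aux_g_mono (a := t) (b := 1) h0 (by norm_num) ht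
  simp only [Real.log_one] at h
  norm_num at h
  linarith

noncomputable def auxF (t : ℝ) : ℝ := t * Real.log t - t + 1 - 3 / 2 * ((t - 1) ^ 2 / (t + 2))

lemma auxF_hasDeriv {x : ℝ} (hx : 0 < x) :
    HasDerivAt auxF
      (Real.log x - 3 / 2 * ((2 * (x - 1) * (x + 2) - (x - 1) ^ 2 * 1) / (x + 2) ^ 2)) x := by
  have h1 : HasDerivAt (fun t : ℝ => t * Real.log t) (Real.log x + 1) x :=
    Real.hasDerivAt_mul_log hx.ne'
  have h2 : HasDerivAt (fun t : ℝ => (t - 1) ^ 2) (2 * (x - 1)) x := by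
    simpa using ((hasDerivAt_id x).sub_const 1).fun_pow 2
  have h3 : HasDerivAt (fun t : ℝ => t + 2) 1 x := by
    simpa using (hasDerivAt_id x).add_const 2
  have h4 : HasDerivAt (fun t : ℝ => (t - 1) ^ 2 / (t + 2))
      ((2 * (x - 1) * (x + 2) - (x - 1) ^ 2 * 1) / (x + 2) ^ 2) x := h2.div h3 (by positivity)
  have := ((h1.sub (hasDerivAt_id x)).add_const 1).sub (h4.const_mul (3 / 2 : ℝ))
  exact this.congr_deriv (by ring)

lemma auxF_contOn : ContinuousOn auxF (Set.Ici 0) := by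
  unfold auxF
  refine (((Real.continuous_mul_log.continuousOn.sub continuousOn_id).add
    continuousOn_const).sub (continuousOn_const.mul
      (ContinuousOn.div (by fun_prop) (by fun_prop) ?_)))
  intro x hx
  have : (0:ℝ) ≤ x := hx
  positivity

lemma aux_diff_eq {x : ℝ} (hx : 0 < x) :
    3 / 2 * ((2 * (x - 1) * (x + 2) - (x - 1) ^ 2 * 1) / (x + 2) ^ 2) - (2 - 4 / (x + 1))
      = -(x - 1) ^ 3 / (2 * (x + 1) * (x + 2) ^ 2) := by
  have h1 : x + 1 ≠ 0 := by positivity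
  have h2 : x + 2 ≠ 0 := by positivity
  field_simp
  ring

lemma auxF_nonneg {t : ℝ} (ht : 0 ≤ t) : 0 ≤ auxF t := by
  have hF1 : auxF 1 = 0 := by norm_num [auxF]
  rcases le_or_gt t 1 with h | h
  · have hanti : AntitoneOn auxF (Set.Icc 0 1) := by
      refine antitoneOn_of_hasDerivWithinAt_nonpos (convex_Icc 0 1)
        (auxF_contOn.mono (by intro x hx; first | exact hx.1 | exact le_trans zero_le_one hx)) (f' := fun x =>
          Real.log x - 3 / 2 * ((2 * (x - 1) * (x + 2) - (x - 1) ^ 2 * 1) / (x + 2) ^ 2)) ?_ ?_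
      · intro x hx
        rw [interior_Icc] at hx
        exact (auxF_hasDeriv hx.1).hasDerivWithinAt
      · intro x hx
        rw [interior_Icc] at hx
        have h1 := aux_log_le hx.1 hx.2.le
        have hx0 := hx.1
        have hx1 := hx.2
        have heq := aux_diff_eq hx.1
        have hnn : (0:ℝ) ≤ -(x - 1) ^ 3 / (2 * (x + 1) * (x + 2) ^ 2) :=
          div_nonneg (by nlinarith) (by positivity)
        linarith
    have := hanti ⟨ht, h⟩ (by norm_num : (1:ℝ) ∈ Set.Icc (0:ℝ) 1) h
    linarith [hF1 ▸ this]
  · have hmono : MonotoneOn auxF (Set.Ici 1) := by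
      refine monotoneOn_of_hasDerivWithinAt_nonneg (convex_Ici 1)
        (auxF_contOn.mono (by intro x hx; first | exact hx.1 | exact le_trans zero_le_one (Set.mem_Ici.mp hx))) (f' := fun x =>
          Real.log x - 3 / 2 * ((2 * (x - 1) * (x + 2) - (x - 1) ^ 2 * 1) / (x + 2) ^ 2)) ?_ ?_
      · intro x hx
        rw [interior_Ici] at hx
        exact (auxF_hasDeriv (by linarith [Set.mem_Ioi.mp hx])).hasDerivWithinAt
      · intro x hx
        rw [interior_Ici] at hx
        have hx1 : (1:ℝ) < x := hx
        have h1 := aux_log_ge hx1.le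
        have heq := aux_diff_eq (by linarith : (0:ℝ) < x)
        have hnn : -(x - 1) ^ 3 / (2 * (x + 1) * (x + 2) ^ 2) ≤ 0 :=
          div_nonpos_of_nonpos_of_nonneg (by nlinarith) (by positivity)
        linarith
    have := hmono (by norm_num : (1:ℝ) ∈ Set.Ici (1:ℝ)) (Set.mem_Ici.mpr h.le) h.le
    linarith [hF1 ▸ this]

lemma key_pointwise {a b : ℝ} (ha : 0 ≤ a) (hb : 0 < b) :
    3 * (a - b) ^ 2 / (2 * (a + 2 * b)) ≤ a * Real.log (a / b) - a + b := by
  have ht : 0 ≤ a / b := div_nonneg ha hb.le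
  have hF := auxF_nonneg ht
  unfold auxF at hF
  have hab : a / b * b = a := div_mul_cancel₀ a hb.ne'
  have hlog : a / b * Real.log (a / b) * b = a * Real.log (a / b) := by
    rw [mul_comm (a / b) _, mul_assoc, hab]
    ring
  -- multiply hF by b
  have hF' : 0 ≤ (a / b * Real.log (a / b) - a / b + 1 - 3 / 2 * ((a / b - 1) ^ 2 / (a / b + 2))) * b :=
    mul_nonneg hF hb.le
  have hq : ((a / b - 1) ^ 2 / (a / b + 2)) * b = (a - b) ^ 2 / (a + 2 * b) := by
    rw [div_mul_eq_mul_div]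
    rw [div_eq_div_iff (by positivity) (by positivity)]
    field_simp
  have hexp : (a / b * Real.log (a / b) - a / b + 1 - 3 / 2 * ((a / b - 1) ^ 2 / (a / b + 2))) * b
      = a * Real.log (a / b) - a + b - 3 / 2 * ((a - b) ^ 2 / (a + 2 * b)) := by
    rw [sub_mul, add_mul, sub_mul, hlog, mul_assoc, hq, div_mul_cancel₀ a hb.ne']
    ring
  rw [hexp] at hF'
  have : 3 * (a - b) ^ 2 / (2 * (a + 2 * b)) = 3 / 2 * ((a - b) ^ 2 / (a + 2 * b)) := by
    field_simp
  linarith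

lemma pinsker_sum {n : ℕ} (w u : Fin (n + 1) → ℝ) (hw : ∀ i, 0 ≤ w i) (hw1 : ∑ i, w i = 1)
    (hu : ∀ i, 0 < u i) (hu1 : ∑ i, u i = 1) :
    (∑ i, |w i - u i|) ^ 2 / 2 ≤ ∑ i, w i * Real.log (w i / u i) := by
  have h1 : ∑ i, w i * Real.log (w i / u i)
      = ∑ i, (w i * Real.log (w i / u i) - w i + u i) := by
    rw [Finset.sum_add_distrib, Finset.sum_sub_distrib, hw1, hu1]
    ring
  have h2 : ∀ i : Fin (n + 1), 3 * (w i - u i) ^ 2 / (2 * (w i + 2 * u i))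
      ≤ w i * Real.log (w i / u i) - w i + u i := fun i => key_pointwise (hw i) (hu i)
  have h3 : ∑ i, 3 * (w i - u i) ^ 2 / (2 * (w i + 2 * u i))
      ≤ ∑ i, (w i * Real.log (w i / u i) - w i + u i) := Finset.sum_le_sum fun i _ => h2 i
  -- Cauchy-Schwarz (Sedrakyan)
  have hg : ∀ i ∈ (Finset.univ : Finset (Fin (n+1))), 0 < w i + 2 * u i := by
    intro i _; have := hw i; have := hu i; linarith
  have hcs := Finset.sq_sum_div_le_sum_sq_div Finset.univ (fun i => |w i - u i|) hg
  have hsum : ∑ i, (w i + 2 * u i) = 3 := by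
    rw [Finset.sum_add_distrib, hw1, ← Finset.mul_sum, hu1]; norm_num
  rw [hsum] at hcs
  have h4 : ∑ i, |w i - u i| ^ 2 / (w i + 2 * u i)
      ≤ ∑ i, 2 * (3 * (w i - u i) ^ 2 / (2 * (w i + 2 * u i))) / 3 := by
    apply Finset.sum_le_sum
    intro i hi
    have hgi := (hg i hi).ne'
    have heq : 2 * (3 * (w i - u i) ^ 2 / (2 * (w i + 2 * u i))) / 3
        = (w i - u i) ^ 2 / (w i + 2 * u i) := by
      field_simp
    rw [sq_abs, heq]
  calc (∑ i, |w i - u i|) ^ 2 / 2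
      = (3 / 2) * ((∑ i, |w i - u i|) ^ 2 / 3) := by ring
    _ ≤ (3 / 2) * (∑ i, 2 * (3 * (w i - u i) ^ 2 / (2 * (w i + 2 * u i))) / 3) := by
        apply mul_le_mul_of_nonneg_left (le_trans hcs h4) (by norm_num)
    _ = ∑ i, 3 * (w i - u i) ^ 2 / (2 * (w i + 2 * u i)) := by
        rw [Finset.mul_sum]
        apply Finset.sum_congr rfl
        intro i _
        ring
    _ ≤ _ := by rw [h1] at *; exact h3

-- ## fconj value and subgradient inequality

lemma negEnt_mem {n : ℕ} {x : Fin (n + 1) → ℝ} (hx : x ∈ simplex n) :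
    negEnt (n := n) x = (((∑ i, x i * Real.log (x i)) : ℝ) : EReal) := by
  simp [negEnt, hx]

lemma fconj_eq {n : ℕ} {u p : Fin (n + 1) → ℝ} (hu : u ∈ simplex n)
    (hp : p ∈ subdiff (negEnt (n := n)) u) :
    fconj (negEnt (n := n)) p
      = ((pairing p u - ∑ i, u i * Real.log (u i) : ℝ) : EReal) := by
  have hbreg : breg (negEnt (n := n)) u p = 0 := hp
  rw [breg, negEnt_mem hu] at hbreg
  set X := fconj (negEnt (n := n)) p with hX
  clear_value X
  have hbot : X ≠ ⊥ := by rintro rfl; simp at hbreg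
  have htop : X ≠ ⊤ := by rintro rfl; simp at hbreg
  lift X to ℝ using ⟨htop, hbot⟩ with c
  rw [show ((∑ i, u i * Real.log (u i) : ℝ) : EReal) + (c : EReal)
      - ((pairing p u : ℝ) : EReal)
      = (((∑ i, u i * Real.log (u i)) + c - pairing p u : ℝ) : EReal) by norm_cast] at hbreg
  norm_cast at hbreg ⊢
  linarith

lemma subgrad_ineq {n : ℕ} {u p : Fin (n + 1) → ℝ} (hu : u ∈ simplex n)
    (hp : p ∈ subdiff (negEnt (n := n)) u) {x : Fin (n + 1) → ℝ} (hx : x ∈ simplex n) :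
    pairing p x - pairing p u
      ≤ (∑ i, x i * Real.log (x i)) - ∑ i, u i * Real.log (u i) := by
  have hle : ((pairing p x : ℝ) : EReal) - negEnt (n := n) x
      ≤ fconj (negEnt (n := n)) p :=
    le_iSup (fun x => ((pairing p x : ℝ) : EReal) - negEnt (n := n) x) x
  rw [fconj_eq hu hp, negEnt_mem hx] at hle
  rw [show ((pairing p x : ℝ) : EReal) - ((∑ i, x i * Real.log (x i) : ℝ) : EReal)
      = ((pairing p x - ∑ i, x i * Real.log (x i) : ℝ) : EReal) by norm_cast] at hle
  rw [EReal.coe_le_coe_iff] at hle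
  linarith

-- ## the slope function and its limits

lemma slope_term_tendsto (c d : ℝ) (hc : 0 < c) :
    Tendsto (fun s : ℝ => ((c + s * d) * Real.log (c + s * d) - c * Real.log c) / s)
      (𝓝[>] 0) (𝓝 (d * (Real.log c + 1))) := by
  have haff : HasDerivAt (fun s : ℝ => c + s * d) d 0 := by
    simpa using ((hasDerivAt_id (0:ℝ)).mul_const d).const_add c
  have hφ : HasDerivAt (fun x : ℝ => x * Real.log x) (Real.log c + 1) c :=
    Real.hasDerivAt_mul_log hc.ne'
  have hcomp : HasDerivAt (fun s : ℝ => (c + s * d) * Real.log (c + s * d))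
      ((Real.log c + 1) * d) 0 := by
    have := HasDerivAt.comp (0:ℝ) (by simpa using hφ) haff
    simpa [Function.comp_def] using this
  have := hasDerivAt_iff_tendsto_slope.mp hcomp
  have h2 : Tendsto (slope (fun s : ℝ => (c + s * d) * Real.log (c + s * d)) 0)
      (𝓝[>] 0) (𝓝 ((Real.log c + 1) * d)) :=
    this.mono_left (nhdsWithin_mono 0 (fun s hs => ne_of_gt hs))
  rw [mul_comm] at h2
  refine h2.congr (fun s => ?_)
  simp [slope, div_eq_inv_mul]

lemma slope_term_atBot (d : ℝ) (hd : 0 < d) :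
    Tendsto (fun s : ℝ => d * Real.log (s * d)) (𝓝[>] 0) atBot := by
  have h1 : Tendsto (fun s : ℝ => s * d) (𝓝[>] 0) (𝓝[>] 0) := by
    refine tendsto_nhdsWithin_of_tendsto_nhds_of_eventually_within _ ?_ ?_
    · have : Tendsto (fun s : ℝ => s * d) (𝓝 0) (𝓝 (0 * d)) := tendsto_id.mul_const d
      rw [zero_mul] at this
      exact this.mono_left nhdsWithin_le_nhds
    · filter_upwards [self_mem_nhdsWithin] with s hs
      exact mul_pos hs hd
  have h2 : Tendsto (fun s : ℝ => Real.log (s * d)) (𝓝[>] 0) atBot :=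
    Real.tendsto_log_nhdsGT_zero.comp h1
  exact (tendsto_const_mul_atBot_of_pos hd).mpr h2

/-- The slope of `ψ` along a ray, as a sum of slopes. -/
lemma slope_sum_eq {n : ℕ} (u d : Fin (n + 1) → ℝ) (s : ℝ) :
    ((∑ i, (u i + s * d i) * Real.log (u i + s * d i)) - ∑ i, u i * Real.log (u i)) / s
      = ∑ i, ((u i + s * d i) * Real.log (u i + s * d i) - u i * Real.log (u i)) / s := by
  rw [← Finset.sum_sub_distrib, Finset.sum_div]

/-- Key inequality on the slope, from the subgradient inequality. -/
lemma slope_lower_bound {n : ℕ} {u p : Fin (n + 1) → ℝ} (hu : u ∈ simplex n)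
    (hp : p ∈ subdiff (negEnt (n := n)) u) {x : Fin (n + 1) → ℝ} (hx : x ∈ simplex n)
    {s : ℝ} (hs0 : 0 < s) (hs1 : s ≤ 1) :
    pairing p x - pairing p u
      ≤ ((∑ i, (u i + s * (x i - u i)) * Real.log (u i + s * (x i - u i)))
        - ∑ i, u i * Real.log (u i)) / s := by
  set y : Fin (n + 1) → ℝ := fun i => u i + s * (x i - u i) with hy
  have hysimplex : y ∈ simplex n := by
    constructor
    · intro i
      have h1 := hu.1 i
      have h2 := hx.1 i
      have : y i = (1 - s) * u i + s * x i := by rw [hy]; ring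
      rw [this]
      have : 0 ≤ (1 - s) * u i := mul_nonneg (by linarith) h1
      have : 0 ≤ s * x i := mul_nonneg hs0.le h2
      linarith
    · have : ∑ i, y i = ∑ i, u i + s * (∑ i, x i - ∑ i, u i) := by
        simp only [hy]
        rw [Finset.sum_add_distrib, ← Finset.mul_sum, Finset.sum_sub_distrib]
      rw [this, hu.2, hx.2]
      ring
  have hineq := subgrad_ineq hu hp hysimplex
  have hpair : pairing p y = pairing p u + s * (pairing p x - pairing p u) := by
    simp only [pairing, hy]
    have hterm : ∀ i : Fin (n + 1), p i * (u i + s * (x i - u i))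
        = p i * u i + s * (p i * x i - p i * u i) := fun i => by ring
    rw [Finset.sum_congr rfl (fun i _ => hterm i), Finset.sum_add_distrib,
      ← Finset.mul_sum, Finset.sum_sub_distrib]
  rw [hpair] at hineq
  rw [le_div_iff₀ hs0]
  calc (pairing p x - pairing p u) * s
      = (pairing p u + s * (pairing p x - pairing p u)) - pairing p u := by ring
    _ ≤ _ := by linarith

/-- If `u` has a subgradient, all its coordinates are positive. -/
lemma upos {n : ℕ} {u p : Fin (n + 1) → ℝ} (hu : u ∈ simplex n)
    (hp : p ∈ subdiff (negEnt (n := n)) u) : ∀ i, 0 < u i := by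
  by_contra hcon
  push_neg at hcon
  obtain ⟨j, hj⟩ := hcon
  have hj0 : u j = 0 := le_antisymm hj (hu.1 j)
  set v : Fin (n + 1) → ℝ := fun _ => 1 / (n + 1) with hv
  have hvpos : ∀ i, (0:ℝ) < v i := fun i => by positivity
  have hvsimplex : v ∈ simplex n := by
    constructor
    · exact fun i => (hvpos i).le
    · rw [hv]
      simp [Finset.sum_const, Finset.card_univ]
      field_simp
  set d : Fin (n + 1) → ℝ := fun i => v i - u i with hd
  set F : ℝ → ℝ := fun s =>
    ((∑ i, (u i + s * d i) * Real.log (u i + s * d i)) - ∑ i, u i * Real.log (u i)) / s with hF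
  -- F is bounded below on (0,1]
  have hbound : ∀ s ∈ Set.Ioc (0:ℝ) 1, pairing p v - pairing p u ≤ F s := by
    intro s hs
    exact slope_lower_bound hu hp hvsimplex hs.1 hs.2
  -- F tends to -∞
  have hAtendsto : Tendsto (fun s => ∑ i ∈ Finset.univ.filter (fun i => 0 < u i),
      ((u i + s * d i) * Real.log (u i + s * d i) - u i * Real.log (u i)) / s) (𝓝[>] 0)
      (𝓝 (∑ i ∈ Finset.univ.filter (fun i => 0 < u i), d i * (Real.log (u i) + 1))) := by
    apply tendsto_finset_sum
    intro i hi
    exact slope_term_tendsto (u i) (d i) (Finset.mem_filter.mp hi).2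
  have hBzero : ∀ i ∈ Finset.univ.filter (fun i => ¬ 0 < u i), u i = 0 := by
    intro i hi
    exact le_antisymm (not_lt.mp (Finset.mem_filter.mp hi).2) (hu.1 i)
  have hBatBot : Tendsto (fun s => ∑ i ∈ Finset.univ.filter (fun i => ¬ 0 < u i),
      ((u i + s * d i) * Real.log (u i + s * d i) - u i * Real.log (u i)) / s) (𝓝[>] 0)
      atBot := by
    have hcardpos : 0 < (Finset.univ.filter (fun i : Fin (n + 1) => ¬ 0 < u i)).card := by
      apply Finset.card_pos.mpr
      exact ⟨j, Finset.mem_filter.mpr ⟨Finset.mem_univ j, by rw [hj0]; exact lt_irrefl 0⟩⟩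
    have heq : ∀ s ∈ Set.Ioi (0:ℝ), (∑ i ∈ Finset.univ.filter (fun i => ¬ 0 < u i),
        ((u i + s * d i) * Real.log (u i + s * d i) - u i * Real.log (u i)) / s)
        = ((Finset.univ.filter (fun i : Fin (n + 1) => ¬ 0 < u i)).card : ℝ)
          * ((1 / (n + 1 : ℝ)) * Real.log (s * (1 / (n + 1 : ℝ)))) := by
      intro s hs
      have hs0 : (s:ℝ) ≠ 0 := ne_of_gt hs
      rw [Finset.sum_congr rfl (fun i hi => ?_), Finset.sum_const, nsmul_eq_mul]
      have hui : u i = 0 := hBzero i hi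
      have hdi : d i = 1 / (n + 1 : ℝ) := by rw [hd]; simp [hv, hui]
      rw [hui, hdi]
      rw [zero_add, Real.log_zero, mul_zero, sub_zero]
      rw [mul_comm s (1 / (n + 1 : ℝ))]
      field_simp
    have hbase : Tendsto (fun s : ℝ => (1 / (n + 1 : ℝ)) * Real.log (s * (1 / (n + 1 : ℝ))))
        (𝓝[>] 0) atBot := slope_term_atBot _ (by positivity)
    have hmul : Tendsto (fun s : ℝ =>
        ((Finset.univ.filter (fun i : Fin (n + 1) => ¬ 0 < u i)).card : ℝ)
          * ((1 / (n + 1 : ℝ)) * Real.log (s * (1 / (n + 1 : ℝ))))) (𝓝[>] 0) atBot := by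
      apply (tendsto_const_mul_atBot_of_pos (by exact_mod_cast hcardpos)).mpr hbase
    refine hmul.congr' ?_
    filter_upwards [self_mem_nhdsWithin] with s hs
    exact (heq s hs).symm
  have hFtendsto : Tendsto F (𝓝[>] 0) atBot := by
    have hsplit : ∀ s : ℝ, F s
        = (∑ i ∈ Finset.univ.filter (fun i => 0 < u i),
            ((u i + s * d i) * Real.log (u i + s * d i) - u i * Real.log (u i)) / s)
          + ∑ i ∈ Finset.univ.filter (fun i => ¬ 0 < u i),
            ((u i + s * d i) * Real.log (u i + s * d i) - u i * Real.log (u i)) / s := by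
      intro s
      rw [hF]
      simp only
      rw [slope_sum_eq u d s]
      exact (Finset.sum_filter_add_sum_filter_not _ _ _).symm
    rw [show F = fun s => (∑ i ∈ Finset.univ.filter (fun i => 0 < u i),
            ((u i + s * d i) * Real.log (u i + s * d i) - u i * Real.log (u i)) / s)
          + ∑ i ∈ Finset.univ.filter (fun i => ¬ 0 < u i),
            ((u i + s * d i) * Real.log (u i + s * d i) - u i * Real.log (u i)) / s
      from funext hsplit]
    exact hAtendsto.add_atBot hBatBot
  -- contradiction
  have hev1 : ∀ᶠ s in 𝓝[>] (0:ℝ), F s < pairing p v - pairing p u :=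
    hFtendsto.eventually (eventually_lt_atBot _)
  have hev2 : ∀ᶠ s in 𝓝[>] (0:ℝ), s ∈ Set.Ioc (0:ℝ) 1 :=
    Ioc_mem_nhdsGT_of_mem (by norm_num)
  obtain ⟨s, hs1, hs2⟩ := (hev1.and hev2).exists
  exact absurd (hbound s hs2) (not_le.mpr hs1)

/-- The gradient inequality: `⟨p, w - u⟩ ≤ ∑ (wᵢ - uᵢ) log uᵢ`. -/
lemma grad_ineq {n : ℕ} {u p : Fin (n + 1) → ℝ} (hu : u ∈ simplex n)
    (hp : p ∈ subdiff (negEnt (n := n)) u) {w : Fin (n + 1) → ℝ} (hw : w ∈ simplex n) :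
    pairing p w - pairing p u ≤ ∑ i, (w i - u i) * Real.log (u i) := by
  have hupos := upos hu hp
  set d : Fin (n + 1) → ℝ := fun i => w i - u i with hd
  set F : ℝ → ℝ := fun s =>
    ((∑ i, (u i + s * d i) * Real.log (u i + s * d i)) - ∑ i, u i * Real.log (u i)) / s with hF
  have hbound : ∀ s ∈ Set.Ioc (0:ℝ) 1, pairing p w - pairing p u ≤ F s := by
    intro s hs
    exact slope_lower_bound hu hp hw hs.1 hs.2
  have hFtendsto : Tendsto F (𝓝[>] 0) (𝓝 (∑ i, d i * (Real.log (u i) + 1))) := by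
    have : Tendsto (fun s => ∑ i,
        ((u i + s * d i) * Real.log (u i + s * d i) - u i * Real.log (u i)) / s) (𝓝[>] 0)
        (𝓝 (∑ i, d i * (Real.log (u i) + 1))) :=
      tendsto_finset_sum _ (fun i _ => slope_term_tendsto (u i) (d i) (hupos i))
    refine this.congr (fun s => ?_)
    rw [hF]
    simp only
    rw [slope_sum_eq u d s]
  have hle : pairing p w - pairing p u ≤ ∑ i, d i * (Real.log (u i) + 1) := by
    refine ge_of_tendsto hFtendsto ?_
    filter_upwards [Ioc_mem_nhdsGT_of_mem (by norm_num : (0:ℝ) ∈ Set.Ico (0:ℝ) 1)] with s hs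
    exact hbound s hs
  have hdsum : ∑ i, d i = 0 := by
    rw [hd]
    rw [Finset.sum_sub_distrib, hu.2, hw.2]
    ring
  have : ∑ i, d i * (Real.log (u i) + 1) = ∑ i, d i * Real.log (u i) + ∑ i, d i := by
    rw [← Finset.sum_add_distrib]
    apply Finset.sum_congr rfl
    intro i _
    ring
  rw [this, hdsum, add_zero] at hle
  exact hle


/-- **The negative entropy on the probability simplex is `Q_2`-convex:**
for every `w ∈ ℝ^{n+1}`, every `u ∈ Δⁿ` and every `u^ψ ∈ ∂ψ(u)`,
`B_ψ(w, u^ψ) ≥ Q_2(‖w − u‖₁)`. -/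
theorem negEntropy_Q2_convex (n : ℕ)
    (w : Fin (n + 1) → ℝ) (u : Fin (n + 1) → ℝ) (hu : u ∈ simplex n)
    (p : Fin (n + 1) → ℝ) (hp : p ∈ subdiff (negEnt (n := n)) u) :
    Q2 (l1norm (w - u)) ≤ breg (negEnt (n := n)) w p := by
  rw [breg, fconj_eq hu hp]
  by_cases hw : w ∈ simplex n
  · -- finite case
    have hupos := upos hu hp
    have hgrad := grad_ineq hu hp hw
    have hpinsker := pinsker_sum w u hw.1 hw.2 hupos hu.2
    -- the l1 norm is at most 2
    have hl1 : l1norm (w - u) = ∑ i, |w i - u i| := by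
      simp [l1norm]
    have hl1nonneg : 0 ≤ l1norm (w - u) := by
      rw [hl1]; positivity
    have hl1le : l1norm (w - u) ≤ 2 := by
      rw [hl1]
      calc ∑ i, |w i - u i| ≤ ∑ i, (w i + u i) := by
            apply Finset.sum_le_sum
            intro i _
            rw [abs_sub_le_iff]
            constructor <;> [linarith [hu.1 i, hw.1 i]; linarith [hu.1 i, hw.1 i]]
        _ = 2 := by rw [Finset.sum_add_distrib, hw.2, hu.2]; norm_num
    rw [Q2, if_pos (abs_le.mpr ⟨by linarith, hl1le⟩), negEnt_mem hw]
    rw [show ((∑ i, w i * Real.log (w i) : ℝ) : EReal)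
        + ((pairing p u - ∑ i, u i * Real.log (u i) : ℝ) : EReal)
        - ((pairing p w : ℝ) : EReal)
        = (((∑ i, w i * Real.log (w i)) + (pairing p u - ∑ i, u i * Real.log (u i))
          - pairing p w : ℝ) : EReal) by norm_cast]
    rw [EReal.coe_le_coe_iff]
    -- identity: KL form
    have hKL : ∑ i, w i * Real.log (w i / u i)
        = ∑ i, w i * Real.log (w i) - ∑ i, w i * Real.log (u i) := by
      rw [← Finset.sum_sub_distrib]
      apply Finset.sum_congr rfl
      intro i _
      rcases eq_or_lt_of_le (hw.1 i) with h0 | h0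
      · rw [← h0]; ring
      · rw [Real.log_div (ne_of_gt h0) (ne_of_gt (hupos i))]; ring
    have hsplit : ∑ i, (w i - u i) * Real.log (u i)
        = ∑ i, w i * Real.log (u i) - ∑ i, u i * Real.log (u i) := by
      rw [← Finset.sum_sub_distrib]
      apply Finset.sum_congr rfl
      intro i _
      ring
    rw [hl1]
    have := hgrad
    rw [hsplit] at this
    calc (∑ i, |w i - u i|) ^ 2 / 2 ≤ ∑ i, w i * Real.log (w i / u i) := hpinsker
      _ = ∑ i, w i * Real.log (w i) - ∑ i, w i * Real.log (u i) := hKL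
      _ ≤ (∑ i, w i * Real.log (w i)) + (pairing p u - ∑ i, u i * Real.log (u i))
          - pairing p w := by linarith
  · -- infinite case
    have : negEnt (n := n) w = ⊤ := by simp [negEnt, hw]
    rw [this]
    rw [show (⊤ : EReal) + ((pairing p u - ∑ i, u i * Real.log (u i) : ℝ) : EReal)
        - ((pairing p w : ℝ) : EReal) = ⊤ by
      rw [EReal.top_add_coe, EReal.top_sub_coe]]
    exact le_top
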